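/- Let ∇ ⊂ ℝ⁴ be defined by x,y,z,w ≥ 0, x+y+z-w ≥ 0, 1-x-y-z ≥ 0. For every positive integer n, the number of lattice points in n∇ equals C(n+4,4) + 2·C(n+3,4) = (3n⁴ + 22n³ + 57n² + 62n + 24)/24. -/

import Mathlib

open Pointwise

def nabla : Set (ℝ × ℝ × ℝ × ℝ) :=
  {p : ℝ × ℝ × ℝ × ℝ |
    0 ≤ p.1 ∧
    0 ≤ p.2.1 ∧
    0 ≤ p.2.2.1 ∧
    0 ≤ p.2.2.2 ∧
    0 ≤ p.1 + p.2.1 + p.2.2.1 - p.2.2.2 ∧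
    0 ≤ 1 - p.1 - p.2.1 - p.2.2.1}

/-!
A lattice point of `n∇` is `(x, y, z, w) ∈ ℤ⁴` with `x, y, z, w ≥ 0` and `w ≤ x + y + z ≤ n`.
Slicing by `s = x + y + z` gives `C(s + 2, 2)` choices of `(x, y, z)` and `s + 1` of `w`, and
`C(s + 2, 2) (s + 1) = C(s + 3, 3) + 2 C(s + 2, 3)`, so the hockey-stick identity sums the slices
to `C(n + 4, 4) + 2 C(n + 3, 4)`; the `h*`-vector of `∇` is `(1, 2, 0, 0, 0)`.
-/

open Finset

theorem mem_smul_nabla {r : ℝ} (hr : 0 ≤ r) {p : ℝ × ℝ × ℝ × ℝ} :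
    p ∈ r • nabla ↔ 0 ≤ p.1 ∧ 0 ≤ p.2.1 ∧ 0 ≤ p.2.2.1 ∧ 0 ≤ p.2.2.2 ∧
      p.2.2.2 ≤ p.1 + p.2.1 + p.2.2.1 ∧ p.1 + p.2.1 + p.2.2.1 ≤ r := by
  obtain ⟨a, b, c, d⟩ := p
  rcases hr.eq_or_lt with rfl | hr
  · rw [Set.zero_smul_set ⟨0, by simp [nabla]⟩]
    simp only [Set.mem_zero, Prod.mk_eq_zero]
    constructor
    · rintro ⟨rfl, rfl, rfl, rfl⟩
      norm_num
    · rintro ⟨ha, hb, hc, hd, hdabc, habc⟩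
      refine ⟨?_, ?_, ?_, ?_⟩ <;> linarith
  · have hpos (x : ℝ) : 0 ≤ r⁻¹ * x ↔ 0 ≤ x := mul_nonneg_iff_of_pos_left (inv_pos.2 hr)
    rw [Set.mem_smul_set_iff_inv_smul_mem₀ hr.ne']
    simp only [nabla, Set.mem_ofPred_eq, Prod.smul_mk, smul_eq_mul]
    rw [← mul_add, ← mul_add, ← mul_sub, hpos, hpos, hpos, hpos, hpos,
      show 1 - r⁻¹ * a - r⁻¹ * b - r⁻¹ * c = r⁻¹ * (r - (a + b + c)) by field_simp; ring, hpos,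
      sub_nonneg, sub_nonneg]

theorem Nat.add_two_choose_two_mul_succ (s : ℕ) :
    (s + 2).choose 2 * (s + 1) = (s + 3).choose 3 + 2 * (s + 2).choose 3 := by
  have h := Nat.choose_succ_right_eq (s + 2) 2
  rw [Nat.choose_succ_succ' (s + 2) 2, Nat.add_sub_cancel] at *
  linarith

theorem sum_range_choose_three_add_two_mul_choose_three (n : ℕ) :
    ∑ s ∈ range (n + 1), ((s + 3).choose 3 + 2 * (s + 2).choose 3) =
      (n + 4).choose 4 + 2 * (n + 3).choose 4 := by
  induction n with
  | zero => rfl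
  | succ n ih =>
    rw [sum_range_succ, ih, Nat.choose_succ_succ' (n + 4) 3, Nat.choose_succ_succ' (n + 3) 3]
    ring

theorem Nat.cast_choose_four {K : Type*} [Field K] [CharZero K] (a : ℕ) :
    (a.choose 4 : K) = a * (a - 1) * (a - 2) * (a - 3) / 24 := by
  rw [Nat.cast_choose_eq_descPochhammer_div]
  simp [descPochhammer_succ_right, Nat.factorial]

noncomputable def trianglePoints (m : ℕ) : Finset (ℤ × ℤ) :=
  (Icc 0 (m : ℤ) ×ˢ Icc 0 (m : ℤ)).filter fun p => p.1 + p.2 ≤ m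

theorem mem_trianglePoints {m : ℕ} {p : ℤ × ℤ} :
    p ∈ trianglePoints m ↔ 0 ≤ p.1 ∧ 0 ≤ p.2 ∧ p.1 + p.2 ≤ m := by
  simp only [trianglePoints, mem_filter, mem_product, mem_Icc]
  omega

theorem card_trianglePoints_filter_sum_eq {m t : ℕ} (ht : t ≤ m) :
    #((trianglePoints m).filter fun p => (p.1 + p.2).toNat = t) = t + 1 := by
  rw [← show #(Icc (0 : ℤ) t) = t + 1 by simp]
  refine card_nbij' (·.1) (fun x => (x, t - x)) ?_ ?_ ?_ ?_ <;> intro p hp <;>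
    simp_all [mem_trianglePoints, Prod.ext_iff] <;> omega

theorem card_trianglePoints (m : ℕ) : #(trianglePoints m) = (m + 2).choose 2 := by
  rw [card_eq_sum_card_fiberwise (f := fun p => (p.1 + p.2).toNat) (t := range (m + 1))]
  · rw [sum_congr rfl fun t ht =>
      card_trianglePoints_filter_sum_eq (Nat.lt_succ_iff.1 (mem_range.1 ht))]
    simpa using Nat.sum_range_add_choose m 1
  · intro p hp
    rw [mem_coe, mem_trianglePoints] at hp
    simp only [coe_range, Set.mem_Iio]
    omega

noncomputable def nablaPoints (n : ℕ) : Finset (ℤ × ℤ × ℤ × ℤ) :=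
  (Icc 0 (n : ℤ) ×ˢ Icc 0 (n : ℤ) ×ˢ Icc 0 (n : ℤ) ×ˢ Icc 0 (n : ℤ)).filter fun v =>
    v.2.2.2 ≤ v.1 + v.2.1 + v.2.2.1 ∧ v.1 + v.2.1 + v.2.2.1 ≤ n

theorem mem_nablaPoints {n : ℕ} {v : ℤ × ℤ × ℤ × ℤ} :
    v ∈ nablaPoints n ↔ 0 ≤ v.1 ∧ 0 ≤ v.2.1 ∧ 0 ≤ v.2.2.1 ∧ 0 ≤ v.2.2.2 ∧
      v.2.2.2 ≤ v.1 + v.2.1 + v.2.2.1 ∧ v.1 + v.2.1 + v.2.2.1 ≤ n := by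
  simp only [nablaPoints, mem_filter, mem_product, mem_Icc]
  omega

theorem coe_nablaPoints (n : ℕ) :
    {v : ℤ × ℤ × ℤ × ℤ | ((v.1 : ℝ), (v.2.1 : ℝ), (v.2.2.1 : ℝ), (v.2.2.2 : ℝ)) ∈ (n : ℝ) • nabla} =
      nablaPoints n := by
  ext v
  simp only [Set.mem_ofPred_eq, mem_coe, mem_nablaPoints, mem_smul_nabla n.cast_nonneg]
  norm_cast

theorem card_nablaPoints_filter_sum_eq {n s : ℕ} (hs : s ≤ n) :
    #((nablaPoints n).filter fun v => (v.1 + v.2.1 + v.2.2.1).toNat = s) =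
      (s + 2).choose 2 * (s + 1) := by
  rw [← card_trianglePoints, ← show #(Icc (0 : ℤ) s) = s + 1 by simp, ← card_product]
  refine card_nbij' (fun v => ((v.1, v.2.1), v.2.2.2))
    (fun q => (q.1.1, q.1.2, s - q.1.1 - q.1.2, q.2)) ?_ ?_ ?_ ?_ <;> intro v hv <;>
    simp_all [mem_trianglePoints, mem_nablaPoints, Prod.ext_iff] <;> omega

theorem card_nablaPoints (n : ℕ) :
    #(nablaPoints n) = (n + 4).choose 4 + 2 * (n + 3).choose 4 := by
  rw [card_eq_sum_card_fiberwise (f := fun v => (v.1 + v.2.1 + v.2.2.1).toNat)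
    (t := range (n + 1)), ← sum_range_choose_three_add_two_mul_choose_three]
  · refine sum_congr rfl fun s hs => ?_
    rw [card_nablaPoints_filter_sum_eq (Nat.lt_succ_iff.1 (mem_range.1 hs)),
      Nat.add_two_choose_two_mul_succ]
  · intro v hv
    rw [mem_coe, mem_nablaPoints] at hv
    simp only [coe_range, Set.mem_Iio]
    omega

theorem stmt10_general (n : ℕ) :
    {v : ℤ × ℤ × ℤ × ℤ | (((v.1 : ℝ), (v.2.1 : ℝ), (v.2.2.1 : ℝ), (v.2.2.2 : ℝ)) : ℝ × ℝ × ℝ × ℝ) ∈ (n : ℝ) • nabla}.ncard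
        = Nat.choose (n + 4) 4 + 2 * Nat.choose (n + 3) 4 ∧
      ((Nat.choose (n + 4) 4 + 2 * Nat.choose (n + 3) 4 : ℚ))
        = (3 * (n : ℚ) ^ 4 + 22 * (n : ℚ) ^ 3 + 57 * (n : ℚ) ^ 2 + 62 * (n : ℚ) ^ 1 + 24) / 24 := by
  refine ⟨?_, ?_⟩
  · rw [coe_nablaPoints, Set.ncard_coe_finset, card_nablaPoints]
  · push_cast [Nat.cast_choose_four]
    ring

theorem stmt10 (n : ℕ) (hn : 0 < n) :
    {v : ℤ × ℤ × ℤ × ℤ | (((v.1 : ℝ), (v.2.1 : ℝ), (v.2.2.1 : ℝ), (v.2.2.2 : ℝ)) : ℝ × ℝ × ℝ × ℝ) ∈ (n : ℝ) • nabla}.ncard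
        = Nat.choose (n + 4) 4 + 2 * Nat.choose (n + 3) 4 ∧
      ((Nat.choose (n + 4) 4 + 2 * Nat.choose (n + 3) 4 : ℚ))
        = (3 * (n : ℚ) ^ 4 + 22 * (n : ℚ) ^ 3 + 57 * (n : ℚ) ^ 2 + 62 * (n : ℚ) ^ 1 + 24) / 24 :=
  stmt10_general n
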